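/- In the canonical RFA of a regular language L, the language accepted from each state L' ∈ Prm(Res(L)) is exactly L' itself, i.e., for every prime residual L' and every string w, w is accepted starting from state L' if and only if w ∈ L'. -/

import Mathlib

def res {α : Type*} (L : Set (List α)) (u : List α) : Set (List α) := {v | u ++ v ∈ L}

def Res {α : Type*} (L : Set (List α)) : Set (Set (List α)) := {L' | ∃ u, L' = res L u}

/-- A language is prime in a class `𝕃` if it belongs to `𝕃` and is not the union of the
languages of `𝕃` strictly contained in it. -/
def IsPrimeIn {α : Type*} (𝕃 : Set (Set (List α))) (L : Set (List α)) : Prop :=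
  L ∈ 𝕃 ∧ L ≠ ⋃₀ {L' | L' ∈ 𝕃 ∧ L' ⊂ L}

def IsRegularLang {α : Type*} (L : Set (List α)) : Prop :=
  ∃ (σ : Type) (_ : Fintype σ) (M : DFA α σ), ∀ w, w ∈ M.accepts ↔ w ∈ L

/-- The canonical RFA of a language `L`: states are the prime residual languages of `L`. -/
def canonicalRFA {α : Type*} (L : Set (List α)) :
    NFA α {L' : Set (List α) // IsPrimeIn (Res L) L'} where
  step q a := {q' | q'.1 ⊆ res q.1 [a]}
  start := {q | q.1 ⊆ L}
  accept := {q | [] ∈ q.1}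

/-- The language accepted from a single state `q` of an NFA. -/
def lq {α σ : Type*} (M : NFA α σ) (q : σ) : Set (List α) :=
  {w | (M.evalFrom {q} w ∩ M.accept).Nonempty}

/-! A word `a :: w` is accepted from a state `q` iff `w` is accepted from some prime residual
`q' ⊆ a⁻¹q`, so by induction on `w` the theorem reduces to `a⁻¹q` being the union of the prime
residuals it contains. That holds because `Res L` is finite for regular `L`: a minimal residual
below `a⁻¹q` containing a given word is prime. -/

theorem nil_mem_lq {α σ : Type*} (M : NFA α σ) (q : σ) : [] ∈ lq M q ↔ q ∈ M.accept := by
  simp [lq, NFA.evalFrom_nil]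

theorem cons_mem_lq {α σ : Type*} (M : NFA α σ) (q : σ) (a : α) (w : List α) :
    a :: w ∈ lq M q ↔ ∃ q' ∈ M.step q a, w ∈ lq M q' := by
  change (M.evalFrom (M.stepSet {q} a) w ∩ M.accept).Nonempty ↔ _
  rw [NFA.stepSet_singleton, NFA.evalFrom_eq_biUnion_singleton, Set.iUnion₂_inter]
  simp only [Set.nonempty_iUnion, exists_prop]
  rfl

theorem res_res {α : Type*} (L : Set (List α)) (u v : List α) :
    res (res L u) v = res L (u ++ v) := by
  ext w; simp [res, List.append_assoc]

theorem mem_res_singleton {α : Type*} {L : Set (List α)} {a : α} {w : List α} :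
    w ∈ res L [a] ↔ a :: w ∈ L := Iff.rfl

theorem res_mem_Res {α : Type*} {L R : Set (List α)} (hR : R ∈ Res L) (v : List α) :
    res R v ∈ Res L := by
  obtain ⟨u, rfl⟩ := hR
  exact ⟨u ++ v, res_res L u v⟩

theorem DFA.res_accepts {α σ : Type*} (M : DFA α σ) (u : List α) :
    res M.accepts u = M.acceptsFrom (M.eval u) := by
  ext v
  exact iff_of_eq (congrArg (· ∈ M.accept) (M.evalFrom_of_append M.start u v))

theorem IsRegularLang.finite_Res {α : Type*} {L : Set (List α)} (hreg : IsRegularLang L) :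
    (Res L).Finite := by
  obtain ⟨σ, _, M, hM⟩ := hreg
  have hL : L = M.accepts := Set.ext fun w => (hM w).symm
  refine (Set.finite_range M.acceptsFrom).subset ?_
  rintro R ⟨u, rfl⟩
  exact ⟨M.eval u, by rw [hL, DFA.res_accepts]⟩

theorem exists_isPrimeIn_subset_of_mem {α : Type*} {𝕃 : Set (Set (List α))} (h𝕃 : 𝕃.Finite)
    {R : Set (List α)} (hR : R ∈ 𝕃) {w : List α} (hw : w ∈ R) :
    ∃ P, IsPrimeIn 𝕃 P ∧ P ⊆ R ∧ w ∈ P := by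
  obtain ⟨P, ⟨hP𝕃, hPR, hwP⟩, hmin⟩ :=
    (h𝕃.subset fun _ h => h.1 : {R' | R' ∈ 𝕃 ∧ R' ⊆ R ∧ w ∈ R'}.Finite).exists_minimal
      ⟨R, hR, subset_rfl, hw⟩
  refine ⟨P, ⟨hP𝕃, fun hunion => ?_⟩, hPR, hwP⟩
  obtain ⟨Q, ⟨hQ𝕃, hQP⟩, hwQ⟩ := hunion ▸ hwP
  exact hQP.2 (hmin ⟨hQ𝕃, hQP.1.trans hPR, hwQ⟩ hQP.1)

theorem canonicalRFA_state_language {α : Type*} (L : Set (List α)) (hreg : IsRegularLang L)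
    (q : {L' : Set (List α) // IsPrimeIn (Res L) L'}) :
    ∀ w : List α, w ∈ lq (canonicalRFA L) q ↔ w ∈ q.1 := by
  intro w
  induction w generalizing q with
  | nil => exact nil_mem_lq _ q
  | cons a w ih =>
    rw [cons_mem_lq, ← mem_res_singleton]
    constructor
    · rintro ⟨q', hq', hw⟩
      exact hq' ((ih q').mp hw)
    · intro hw
      obtain ⟨P, hP, hPres, hwP⟩ :=
        exists_isPrimeIn_subset_of_mem hreg.finite_Res (res_mem_Res q.2.1 [a]) hw
      exact ⟨⟨P, hP⟩, hPres, (ih ⟨P, hP⟩).mpr hwP⟩
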